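/- Let t = (n_t, g_t, P_t) be a k-creature with n_t ≥ 2, and let g' be a partial function from {0,…,N−1} to {0,1} with g_t ⊆ g' and |dom(g') ∖ dom(g_t)| ≤ 2^(k+3). Suppose r_f ∈ [0,1] (for f ∈ P_t) satisfy 2^(−2^(k+3)) ≤ a, where a = 2^(|dom(g')|−N) · Σ{ r_f : f ∈ P_t, g' ⊆ f }. Then there is a k-creature s = (n_s, g_s, P_s) ∈ Σ*(t) such that: (α) n_s = n_t − 1 and g' ⊆ g_s and P_s = { f ∈ P_t : g_s ⊆ f }; (β) F*_s(r_f : f ∈ P_s) ≥ a·(1 − 2^(−2^(k+3))); (γ) for every partial function h from {0,…,N−1} to {0,1} with g_s ⊆ h and |dom(h) ∖ dom(g_s)| ≤ 2^(k+3), the quantity 2^(|dom(h)|−N) · Σ{ r_f : f ∈ P_s, h ⊆ f } lies in the interval [F*_s(r_f : f ∈ P_s), F*_s(r_f : f ∈ P_s)·(1 + 2^(−2^(k+3)))]. -/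

import Mathlib

/-!
Write `w(h) = 2^(|dom h| - N) · Σ {r_f : f ∈ P_t, h ⊆ f}`. Then `w ≤ 1`, and `w(g)` is the mean
of `w` over the `2^|S|` extensions of `g` to `dom g ∪ S`. Starting from `g'`, extend by at most
`2^(k+3)` coordinates as long as this multiplies `w` by more than `1 + ε`, `ε = 2^(-2^(2k+7))`.
As `w(g') ≥ 2^(-2^(k+3))`, this stops after `T ≈ 2^(k+3) / log₂(1 + ε)` rounds, at some `g_s`,
and the growth of `φ` leaves room for the `≤ (T + 1)·2^(k+3)` new coordinates. No admissible
extension of `g_s` exceeds `(1 + ε)·w(g_s)`, so by the mean property none falls below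
`(1 - 2^(2^(k+3))·ε)·w(g_s)` either; hence `F*_s` and all admissible values lie within the
claimed factors of `w(g_s) ≥ a`.
-/

namespace MeasuredCreatures

/-- The condition on the parameter function `φ = φ_k`:
`φ(0) = 2^(k+4)` and `φ(i+1) > 2^(2^(k+3)) + φ(i) + 2^(2k+7)/log₂(1 + 2^(−2^(2k+7)))`. -/
def PhiCond (k : ℕ) (φ : ℕ → ℕ) : Prop :=
  φ 0 = 2 ^ (k + 4) ∧
  ∀ i : ℕ, (φ (i + 1) : ℝ) >
    (2 : ℝ) ^ (2 ^ (k + 3)) + (φ i : ℝ) +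
      (2 : ℝ) ^ (2 * k + 7) / Real.logb 2 (1 + ((2 : ℝ) ^ (2 ^ (2 * k + 7)))⁻¹)

/-- `N = N_k = 2^(1+⌊log₂ φ(k+1)⌋)`. -/
def Nval (k : ℕ) (φ : ℕ → ℕ) : ℕ := 2 ^ (1 + Nat.log 2 (φ (k + 1)))

/-- The domain of a partial function `g` from `{0,…,N−1}` to `{0,1}`. -/
def pdom {N : ℕ} (g : Fin N → Option Bool) : Finset (Fin N) :=
  Finset.univ.filter fun i => (g i).isSome

/-- `g ⊆ g'` for partial functions. -/
def PSub {N : ℕ} (g g' : Fin N → Option Bool) : Prop :=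
  ∀ (i : Fin N) (b : Bool), g i = some b → g' i = some b

/-- `g ⊆ f` for a partial function `g` and a total function `f`. -/
def PSubF {N : ℕ} (g : Fin N → Option Bool) (f : Fin N → Bool) : Prop :=
  ∀ (i : Fin N) (b : Bool), g i = some b → f i = b

/-- A `k`-creature: a triple `(n, g, P)` with `n ≤ k` (the norm), `g` a partial function
from `{0,…,N−1}` to `{0,1}` with `|dom g| ≤ φ(k−n)`, and `P` a nonempty set of total
functions extending `g`. -/
structure Creature (k N : ℕ) (φ : ℕ → ℕ) where
  n : ℕ
  g : Fin N → Option Bool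
  P : Finset (Fin N → Bool)
  n_le : n ≤ k
  g_card : (pdom g).card ≤ φ (k - n)
  P_ne : P.Nonempty
  P_ext : ∀ f ∈ P, PSubF g f

/-- `s ∈ Σ*(t)`. -/
def SigmaRel {k N : ℕ} {φ : ℕ → ℕ} (s t : Creature k N φ) : Prop :=
  s.n ≤ t.n ∧ PSub t.g s.g ∧ s.P ⊆ t.P

open Classical in
/-- The averaging function
`F*_t(r) = min { 2^(|dom h|−N) · Σ{ r_f : f ∈ P_t, h ⊆ f } : g_t ⊆ h, |dom h ∖ dom g_t| ≤ 2^(k+3) }`. -/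
noncomputable def Fstar {k N : ℕ} {φ : ℕ → ℕ} (t : Creature k N φ)
    (r : (Fin N → Bool) → ℝ) : ℝ :=
  sInf {v : ℝ | ∃ h : Fin N → Option Bool,
    PSub t.g h ∧ (pdom h \ pdom t.g).card ≤ 2 ^ (k + 3) ∧
    v = (2 : ℝ) ^ (((pdom h).card : ℤ) - (N : ℤ)) *
      ∑ f ∈ t.P, (if PSubF h f then r f else 0)}
open Finset Classical

variable {N : ℕ}

section PartialFunctions

lemma mem_pdom {g : Fin N → Option Bool} {i : Fin N} : i ∈ pdom g ↔ (g i).isSome := by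
  simp [pdom]

lemma notMem_pdom {g : Fin N → Option Bool} {i : Fin N} : i ∉ pdom g ↔ g i = none := by
  simp [pdom]

lemma PSub.refl (g : Fin N → Option Bool) : PSub g g := fun _ _ h => h

lemma PSub.trans {g₁ g₂ g₃ : Fin N → Option Bool} (h₁₂ : PSub g₁ g₂) (h₂₃ : PSub g₂ g₃) :
    PSub g₁ g₃ := fun i b hb => h₂₃ i b (h₁₂ i b hb)

lemma PSub.psubF {g g' : Fin N → Option Bool} {f : Fin N → Bool} (hg : PSub g g')
    (hf : PSubF g' f) : PSubF g f := fun i b hb => hf i b (hg i b hb)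

def extend (g : Fin N → Option Bool) (S : Finset (Fin N)) (σ : S → Bool) :
    Fin N → Option Bool :=
  fun i => if h : i ∈ S then some (σ ⟨i, h⟩) else g i

lemma pdom_extend (g : Fin N → Option Bool) (S : Finset (Fin N)) (σ : S → Bool) :
    pdom (extend g S σ) = pdom g ∪ S := by
  ext i
  by_cases hi : i ∈ S <;> simp [mem_pdom, extend, hi]

lemma psub_extend {g : Fin N → Option Bool} {S : Finset (Fin N)} (hS : Disjoint S (pdom g))
    (σ : S → Bool) : PSub g (extend g S σ) := by
  intro i b hb
  have hi : i ∉ S := disjoint_right.mp hS (mem_pdom.mpr (by simp [hb]))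
  simpa [extend, hi] using hb

lemma psubF_extend_iff {g : Fin N → Option Bool} {S : Finset (Fin N)} (hS : Disjoint S (pdom g))
    (σ : S → Bool) (f : Fin N → Bool) :
    PSubF (extend g S σ) f ↔ PSubF g f ∧ σ = fun i : S => f i := by
  constructor
  · intro hf
    refine ⟨(psub_extend hS σ).psubF hf, funext fun i => (hf i.1 (σ i) ?_).symm⟩
    simp [extend]
  · rintro ⟨hf, rfl⟩ i b hb
    by_cases hi : i ∈ S
    · simpa [extend, hi] using hb
    · exact hf i b (by simpa [extend, hi] using hb)

lemma exists_extend_eq {g h : Fin N → Option Bool} (hgh : PSub g h) :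
    ∃ σ, extend g (pdom h \ pdom g) σ = h := by
  refine ⟨fun i => (h i).get (mem_pdom.mp (mem_sdiff.mp i.2).1), funext fun i => ?_⟩
  by_cases hi : i ∈ pdom h \ pdom g
  · simp [extend, hi]
  · simp only [extend, hi, dite_false]
    by_cases hig : i ∈ pdom g
    · obtain ⟨b, hb⟩ := Option.isSome_iff_exists.mp (mem_pdom.mp hig)
      rw [hb, hgh i b hb]
    · have hih : i ∉ pdom h := fun hmem => hi (mem_sdiff.mpr ⟨hmem, hig⟩)
      rw [notMem_pdom.mp hig, notMem_pdom.mp hih]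

end PartialFunctions

section Weight

variable (P : Finset (Fin N → Bool)) (r : (Fin N → Bool) → ℝ)

/-- The quantity minimised in `F*`. -/
noncomputable def weight (g : Fin N → Option Bool) : ℝ :=
  (2 : ℝ) ^ (((pdom g).card : ℤ) - (N : ℤ)) * ∑ f ∈ P, if PSubF g f then r f else 0

variable {P r}

lemma weight_nonneg (hr : ∀ f ∈ P, 0 ≤ r f) (g : Fin N → Option Bool) : 0 ≤ weight P r g :=
  mul_nonneg (by positivity) (sum_nonneg fun f hf => by split_ifs <;> simp [hr f hf])

lemma card_filter_psubF_le (g : Fin N → Option Bool) :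
    #{f : Fin N → Bool | PSubF g f} ≤ 2 ^ (N - #(pdom g)) := by
  have hinj : Set.InjOn (fun (f : Fin N → Bool) (i : ((pdom g)ᶜ : Finset (Fin N))) => f i)
      {f | PSubF g f} := by
    intro f₁ hf₁ f₂ hf₂ heq
    funext i
    by_cases hi : i ∈ pdom g
    · obtain ⟨b, hb⟩ := Option.isSome_iff_exists.mp (mem_pdom.mp hi)
      rw [hf₁ i b hb, hf₂ i b hb]
    · exact congrFun heq ⟨i, mem_compl.mpr hi⟩
  calc #{f : Fin N → Bool | PSubF g f}
      ≤ #(univ : Finset (((pdom g)ᶜ : Finset (Fin N)) → Bool)) :=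
        card_le_card_of_injOn _ (fun _ _ => mem_coe.mpr (mem_univ _))
          (by simpa using hinj)
    _ = 2 ^ (N - #(pdom g)) := by simp

lemma weight_le_one (hr : ∀ f ∈ P, r f ≤ 1) (g : Fin N → Option Bool) : weight P r g ≤ 1 := by
  have hsum : ∑ f ∈ P, (if PSubF g f then r f else 0) ≤ (2 : ℝ) ^ (N - #(pdom g)) := by
    rw [← sum_filter]
    calc ∑ f ∈ P with PSubF g f, r f ≤ #{f ∈ P | PSubF g f} • (1 : ℝ) :=
          sum_le_card_nsmul _ _ _ fun f hf => hr f (mem_filter.mp hf).1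
      _ ≤ (2 : ℝ) ^ (N - #(pdom g)) := by
          rw [nsmul_one]
          exact_mod_cast (card_le_card (filter_subset_filter _
            (subset_univ P))).trans (card_filter_psubF_le g)
  have hcard : #(pdom g) ≤ N := (card_le_univ _).trans (by simp)
  calc weight P r g ≤ (2 : ℝ) ^ ((#(pdom g) : ℤ) - N) * (2 : ℝ) ^ (N - #(pdom g)) :=
        mul_le_mul_of_nonneg_left hsum (by positivity)
    _ = 1 := by
        rw [← zpow_natCast, ← zpow_add₀ two_ne_zero, Nat.cast_sub hcard, sub_add_sub_cancel',
          sub_self, zpow_zero]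

lemma sum_weight_extend {g : Fin N → Option Bool} {S : Finset (Fin N)}
    (hS : Disjoint S (pdom g)) :
    ∑ σ : S → Bool, weight P r (extend g S σ) = 2 ^ #S * weight P r g := by
  have hmass : ∀ f, ∑ σ : S → Bool, (if PSubF (extend g S σ) f then r f else 0)
      = if PSubF g f then r f else 0 := by
    intro f
    by_cases hf : PSubF g f
    · simp [psubF_extend_iff hS, hf, sum_ite_eq']
    · simp [psubF_extend_iff hS, hf]
  simp only [weight, pdom_extend, card_union_of_disjoint hS.symm, ← mul_sum]
  rw [sum_comm, sum_congr rfl fun f _ => hmass f, Nat.cast_add, add_comm,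
    add_sub_assoc, zpow_add₀ two_ne_zero, zpow_natCast, mul_assoc]

/-- The weight of `g` is the mean of the weights of its extensions on `dom h \ dom g`, one of
which is `h`. -/
lemma weight_ge_of_weight_extend_le {g h : Fin N → Option Bool} (hgh : PSub g h) {c : ℝ}
    (hc : ∀ σ, weight P r (extend g (pdom h \ pdom g) σ) ≤ c) :
    2 ^ #(pdom h \ pdom g) * weight P r g - (2 ^ #(pdom h \ pdom g) - 1) * c ≤ weight P r h := by
  set S := pdom h \ pdom g
  obtain ⟨σ₀, hσ₀⟩ := exists_extend_eq hgh
  have hrest := sum_le_card_nsmul (univ.erase σ₀)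
    (fun σ => weight P r (extend g S σ)) c fun σ _ => hc σ
  have hcard : (#(univ.erase σ₀) : ℝ) = 2 ^ #S - 1 := by
    rw [card_erase_of_mem (mem_univ _), card_univ, Fintype.card_fun, Fintype.card_coe,
      Fintype.card_bool, Nat.cast_sub Nat.one_le_two_pow]
    push_cast
    rfl
  rw [nsmul_eq_mul, hcard] at hrest
  rw [← hσ₀, ← sum_weight_extend sdiff_disjoint, ← add_sum_erase _ _ (mem_univ σ₀)]
  linarith

lemma weight_filter_psubF {g h : Fin N → Option Bool} (hgh : PSub g h) :
    weight ({f ∈ P | PSubF g f}) r h = weight P r h := by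
  unfold weight
  rw [sum_filter]
  congr 1
  refine sum_congr rfl fun f _ => ?_
  by_cases hf : PSubF h f <;> simp [hf, hgh.psubF]

lemma filter_psubF_nonempty_of_weight_pos {g : Fin N → Option Bool} (hg : 0 < weight P r g) :
    ({f ∈ P | PSubF g f}).Nonempty := by
  rw [nonempty_iff_ne_empty]
  intro hempty
  have hzero : weight ({f ∈ P | PSubF g f}) r g = 0 := by simp [hempty, weight]
  rw [weight_filter_psubF (PSub.refl g)] at hzero
  linarith

end Weight

section Stability

def IsStable (w : (Fin N → Option Bool) → ℝ) (M : ℕ) (ε : ℝ) (g : Fin N → Option Bool) :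
    Prop :=
  ∀ h, PSub g h → #(pdom h \ pdom g) ≤ M → w h ≤ (1 + ε) * w g

/-- Each failure of stability multiplies `w` by more than `1 + ε`, and `w ≤ 1` bounds the number
of such steps. -/
lemma exists_isStable_extension {w : (Fin N → Option Bool) → ℝ} (hw : ∀ g, w g ≤ 1)
    (M : ℕ) {ε : ℝ} (hε : 0 ≤ ε) (T : ℕ) (g : Fin N → Option Bool) (hg : 1 < w g * (1 + ε) ^ T) :
    ∃ gs, PSub g gs ∧ #(pdom gs \ pdom g) ≤ T * M ∧ w g ≤ w gs ∧ IsStable w M ε gs := by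
  induction T generalizing g with
  | zero => exact absurd (hw g) (by simpa using hg)
  | succ T ih =>
    by_cases hstable : IsStable w M ε g
    · exact ⟨g, PSub.refl g, by simp, le_rfl, hstable⟩
    simp only [IsStable, not_forall, not_le] at hstable
    obtain ⟨h, hgh, hcard, hgrow⟩ := hstable
    have hpow : 0 < (1 + ε) ^ T := by positivity
    have hwg : 0 < w g := pos_of_mul_pos_left (one_pos.trans hg) (by positivity)
    obtain ⟨gs, hhgs, hcard', hwh, hgs⟩ := ih h (by
      calc 1 < w g * (1 + ε) ^ (T + 1) := hg
        _ = (1 + ε) * w g * (1 + ε) ^ T := by ring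
        _ ≤ w h * (1 + ε) ^ T := by gcongr)
    refine ⟨gs, hgh.trans hhgs, ?_, by nlinarith, hgs⟩
    calc #(pdom gs \ pdom g) ≤ #(pdom gs \ pdom h) + #(pdom h \ pdom g) :=
          (card_le_card (sdiff_triangle _ _ _)).trans (card_union_le _ _)
      _ ≤ (T + 1) * M := by rw [add_mul, one_mul]; omega

lemma IsStable.weight_ge {P : Finset (Fin N → Bool)} {r : (Fin N → Bool) → ℝ}
    (hr : ∀ f ∈ P, 0 ≤ r f) {M : ℕ} {ε : ℝ} (hε : 0 ≤ ε) {g : Fin N → Option Bool}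
    (hg : IsStable (weight P r) M ε g) {h : Fin N → Option Bool} (hgh : PSub g h)
    (hcard : #(pdom h \ pdom g) ≤ M) :
    weight P r g * (1 - 2 ^ M * ε) ≤ weight P r h := by
  have hext : ∀ σ, weight P r (extend g (pdom h \ pdom g) σ) ≤ (1 + ε) * weight P r g := by
    intro σ
    refine hg _ (psub_extend sdiff_disjoint σ) ?_
    rw [pdom_extend, union_sdiff_left]
    exact (card_le_card sdiff_subset).trans hcard
  have hmean := weight_ge_of_weight_extend_le hgh hext
  have hpow : (2 : ℝ) ^ #(pdom h \ pdom g) ≤ 2 ^ M := pow_le_pow_right₀ one_le_two hcard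
  have hv := weight_nonneg hr g
  nlinarith [mul_nonneg hv hε, mul_nonneg (mul_nonneg hv hε) (sub_nonneg.mpr hpow)]

lemma IsStable.filter_psubF {P : Finset (Fin N → Bool)} {r : (Fin N → Bool) → ℝ} {M : ℕ}
    {ε : ℝ} {g : Fin N → Option Bool} (hg : IsStable (weight P r) M ε g) :
    IsStable (weight {f ∈ P | PSubF g f} r) M ε g := fun h hgh hcard => by
  rw [weight_filter_psubF hgh, weight_filter_psubF (PSub.refl g)]
  exact hg h hgh hcard

end Stability

section Parameters

lemma exists_two_pow_lt_pow {b : ℝ} (hb : 1 < b) (m : ℕ) :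
    ∃ T : ℕ, (2 : ℝ) ^ m < b ^ T ∧ (T : ℝ) ≤ m / Real.logb 2 b + 1 := by
  set L := Real.logb 2 b
  have hL : 0 < L := Real.logb_pos one_lt_two hb
  refine ⟨⌊m / L⌋₊ + 1, ?_, ?_⟩
  · have hlt : (m : ℝ) < L * (⌊m / L⌋₊ + 1 : ℕ) := by
      rw [← div_lt_iff₀' hL]
      exact_mod_cast Nat.lt_floor_add_one _
    calc (2 : ℝ) ^ m = 2 ^ (m : ℝ) := (Real.rpow_natCast 2 m).symm
      _ < 2 ^ (L * (⌊m / L⌋₊ + 1 : ℕ)) := Real.rpow_lt_rpow_of_exponent_lt one_lt_two hlt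
      _ = b ^ (⌊m / L⌋₊ + 1) := by
          rw [Real.rpow_mul_natCast zero_le_two, Real.rpow_logb two_pos (by norm_num) (by linarith)]
  · push_cast
    linarith [Nat.floor_le (div_nonneg m.cast_nonneg hL.le)]

/-- `T` rounds of stabilisation exhaust the room between `2^(-2^(k+3))` and `1`, and `φ` grows
fast enough to absorb the coordinates they add. -/
lemma exists_num_steps (k : ℕ) :
    ∃ T : ℕ, (2 : ℝ) ^ (2 ^ (k + 3)) < (1 + ((2 : ℝ) ^ (2 ^ (2 * k + 7)))⁻¹) ^ T ∧
      (T : ℝ) * 2 ^ (k + 3) + 2 ^ (k + 3) ≤ (2 : ℝ) ^ (2 ^ (k + 3)) +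
        (2 : ℝ) ^ (2 * k + 7) / Real.logb 2 (1 + ((2 : ℝ) ^ (2 ^ (2 * k + 7)))⁻¹) := by
  set L := Real.logb 2 (1 + ((2 : ℝ) ^ (2 ^ (2 * k + 7)))⁻¹)
  have hb : 1 < 1 + ((2 : ℝ) ^ (2 ^ (2 * k + 7)))⁻¹ := lt_add_of_pos_right 1 (by positivity)
  have hL : 0 < L := Real.logb_pos one_lt_two hb
  obtain ⟨T, hpow, hT⟩ := exists_two_pow_lt_pow hb (2 ^ (k + 3))
  refine ⟨T, hpow, ?_⟩
  set m : ℝ := 2 ^ (k + 3)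
  have hm : 0 ≤ m := by positivity
  push_cast at hT
  have hsq : m * m / L ≤ (2 : ℝ) ^ (2 * k + 7) / L := by
    gcongr
    rw [← pow_add]
    exact pow_le_pow_right₀ one_le_two (by omega)
  have htwo : 2 * m ≤ (2 : ℝ) ^ (2 ^ (k + 3)) := by
    rw [← pow_succ']
    exact pow_le_pow_right₀ one_le_two (Nat.lt_two_pow_self (n := k + 3))
  calc (T : ℝ) * m + m ≤ (m / L + 1) * m + m := by gcongr
    _ = m * m / L + 2 * m := by ring
    _ ≤ _ := by linarith

lemma two_mul_sq_le (k : ℕ) :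
    2 * ((2 : ℝ) ^ (2 ^ (k + 3))) ^ 2 ≤ (2 : ℝ) ^ (2 ^ (2 * k + 7)) := by
  rw [← pow_mul, ← pow_succ']
  refine pow_le_pow_right₀ one_le_two ?_
  have h₁ : 2 ^ (k + 3) * 2 = 2 ^ (k + 4) := by ring
  have h₂ : 2 ^ (k + 5) = 2 ^ (k + 4) * 2 := by rw [pow_succ]
  have h₃ : 2 ^ (k + 5) ≤ 2 ^ (2 * k + 7) := Nat.pow_le_pow_right two_pos (by omega)
  have h₄ : 1 ≤ 2 ^ (k + 4) := Nat.one_le_two_pow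
  omega

lemma mul_le_inv_and_one_add_le {A ε : ℝ} (hA : 2 ≤ A) (hε : 0 < ε) (h : 2 * A ^ 2 ≤ ε⁻¹) :
    A * ε ≤ A⁻¹ ∧ 1 + ε ≤ (1 - A * ε) * (1 + A⁻¹) := by
  have hAinv : A * A⁻¹ = 1 := mul_inv_cancel₀ (by positivity)
  have hsq : 2 * A ^ 2 * ε ≤ 1 := by
    simpa [inv_mul_cancel₀ hε.ne'] using mul_le_mul_of_nonneg_right h hε.le
  have hx : 0 < A⁻¹ := by positivity
  constructor
  · nlinarith [mul_le_mul_of_nonneg_right hsq hx.le]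
  · nlinarith [mul_le_mul_of_nonneg_right hsq hx.le, mul_le_mul_of_nonneg_right hA hε.le]

end Parameters

section Creatures

variable {k : ℕ} {φ : ℕ → ℕ}

lemma Fstar_le_weight {s : Creature k N φ} {r : (Fin N → Bool) → ℝ} (hr : ∀ f ∈ s.P, 0 ≤ r f)
    {h : Fin N → Option Bool} (hgh : PSub s.g h) (hcard : #(pdom h \ pdom s.g) ≤ 2 ^ (k + 3)) :
    Fstar s r ≤ weight s.P r h :=
  csInf_le ⟨0, by rintro _ ⟨h, -, -, rfl⟩; exact weight_nonneg hr h⟩ ⟨h, hgh, hcard, rfl⟩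

lemma le_Fstar {s : Creature k N φ} {r : (Fin N → Bool) → ℝ} {c : ℝ}
    (hc : ∀ h, PSub s.g h → #(pdom h \ pdom s.g) ≤ 2 ^ (k + 3) → c ≤ weight s.P r h) :
    c ≤ Fstar s r :=
  le_csInf ⟨_, s.g, PSub.refl _, by simp, rfl⟩ fun _ ⟨h, hgh, hcard, hv⟩ => hv ▸ hc h hgh hcard

lemma card_pdom_le_phi_succ (hφ : PhiCond k φ) {i T : ℕ} {g g' gs : Fin N → Option Bool}
    (hg : #(pdom g) ≤ φ i) (hg' : #(pdom g' \ pdom g) ≤ 2 ^ (k + 3))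
    (hgs : #(pdom gs \ pdom g') ≤ T * 2 ^ (k + 3))
    (hT : (T : ℝ) * 2 ^ (k + 3) + 2 ^ (k + 3) ≤ (2 : ℝ) ^ (2 ^ (k + 3)) +
        (2 : ℝ) ^ (2 * k + 7) / Real.logb 2 (1 + ((2 : ℝ) ^ (2 ^ (2 * k + 7)))⁻¹)) :
    #(pdom gs) ≤ φ (i + 1) := by
  have hcard : #(pdom gs) ≤ φ i + 2 ^ (k + 3) + T * 2 ^ (k + 3) := by
    have := card_le_card_sdiff_add_card (s := pdom gs) (t := pdom g')
    have := card_le_card_sdiff_add_card (s := pdom g') (t := pdom g)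
    omega
  have hcard' : (#(pdom gs) : ℝ) ≤ φ i + 2 ^ (k + 3) + T * 2 ^ (k + 3) := by exact_mod_cast hcard
  have hφi := hφ.2 i
  exact_mod_cast (by linarith : (#(pdom gs) : ℝ) < φ (i + 1)).le

lemma IsStable.Fstar_bounds {s : Creature k N φ} {r : (Fin N → Bool) → ℝ}
    (hr : ∀ f ∈ s.P, 0 ≤ r f)
    (hs : IsStable (weight s.P r) (2 ^ (k + 3)) ((2 : ℝ) ^ (2 ^ (2 * k + 7)))⁻¹ s.g) :
    weight s.P r s.g * (1 - ((2 : ℝ) ^ (2 ^ (k + 3)))⁻¹) ≤ Fstar s r ∧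
      ∀ h, PSub s.g h → #(pdom h \ pdom s.g) ≤ 2 ^ (k + 3) →
        weight s.P r h ≤ Fstar s r * (1 + ((2 : ℝ) ^ (2 ^ (k + 3)))⁻¹) := by
  set A : ℝ := (2 : ℝ) ^ (2 ^ (k + 3))
  set ε : ℝ := ((2 : ℝ) ^ (2 ^ (2 * k + 7)))⁻¹
  have hε : 0 < ε := by positivity
  obtain ⟨hAε, hεA⟩ := mul_le_inv_and_one_add_le (A := A)
    (le_self_pow₀ one_le_two (by positivity)) hε (by simpa [ε] using two_mul_sq_le k)
  have hv := weight_nonneg hr s.g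
  have hlow : weight s.P r s.g * (1 - A * ε) ≤ Fstar s r :=
    le_Fstar fun h hgh hcard => hs.weight_ge hr hε.le hgh hcard
  refine ⟨le_trans (mul_le_mul_of_nonneg_left (by linarith) hv) hlow, fun h hgh hcard => ?_⟩
  calc weight s.P r h ≤ (1 + ε) * weight s.P r s.g := hs h hgh hcard
    _ ≤ weight s.P r s.g * (1 - A * ε) * (1 + A⁻¹) := by nlinarith
    _ ≤ Fstar s r * (1 + A⁻¹) := by gcongr

end Creatures

open Classical in
/-- Lemma 2.1 of the paper: improving a creature relative to `g'`. -/
theorem creature_improvement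
    (k : ℕ) (φ : ℕ → ℕ) (hφ : PhiCond k φ)
    (t : Creature k (Nval k φ) φ) (ht : 2 ≤ t.n)
    (g' : Fin (Nval k φ) → Option Bool) (hg'1 : PSub t.g g')
    (hg'2 : (pdom g' \ pdom t.g).card ≤ 2 ^ (k + 3))
    (r : (Fin (Nval k φ) → Bool) → ℝ) (hr : ∀ f ∈ t.P, r f ∈ Set.Icc (0 : ℝ) 1)
    (a : ℝ)
    (ha : a = (2 : ℝ) ^ (((pdom g').card : ℤ) - (Nval k φ : ℤ)) *
      ∑ f ∈ t.P, (if PSubF g' f then r f else 0))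
    (haL : ((2 : ℝ) ^ (2 ^ (k + 3)))⁻¹ ≤ a) :
    ∃ s : Creature k (Nval k φ) φ, SigmaRel s t ∧
      s.n = t.n - 1 ∧ PSub g' s.g ∧
      (∀ f : Fin (Nval k φ) → Bool, f ∈ s.P ↔ f ∈ t.P ∧ PSubF s.g f) ∧
      a * (1 - ((2 : ℝ) ^ (2 ^ (k + 3)))⁻¹) ≤ Fstar s r ∧
      ∀ h : Fin (Nval k φ) → Option Bool, PSub s.g h →
        (pdom h \ pdom s.g).card ≤ 2 ^ (k + 3) →
        (2 : ℝ) ^ (((pdom h).card : ℤ) - (Nval k φ : ℤ)) *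
            (∑ f ∈ s.P, (if PSubF h f then r f else 0)) ∈
          Set.Icc (Fstar s r) (Fstar s r * (1 + ((2 : ℝ) ^ (2 ^ (k + 3)))⁻¹)) := by
  set ε : ℝ := ((2 : ℝ) ^ (2 ^ (2 * k + 7)))⁻¹
  have ha₀ : 0 < a := (inv_pos.mpr (by positivity)).trans_le haL
  obtain ⟨T, hAT, hT⟩ := exists_num_steps k
  have hstart : 1 < weight t.P r g' * (1 + ε) ^ T := by
    calc 1 = ((2 : ℝ) ^ (2 ^ (k + 3)))⁻¹ * (2 : ℝ) ^ (2 ^ (k + 3)) :=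
          (inv_mul_cancel₀ (by positivity)).symm
      _ < a * (1 + ε) ^ T := mul_lt_mul' haL hAT (by positivity) ha₀
      _ = _ := by rw [ha]; rfl
  obtain ⟨gs, hg'gs, hcard, hags, hstable⟩ := exists_isStable_extension
    (weight_le_one fun f hf => (hr f hf).2) (2 ^ (k + 3)) (by positivity) T g' hstart
  have hags' : a ≤ weight t.P r gs := by rw [ha]; exact hags
  let s : Creature k (Nval k φ) φ :=
    ⟨t.n - 1, gs, {f ∈ t.P | PSubF gs f}, by have := t.n_le; omega,
      by rw [show k - (t.n - 1) = k - t.n + 1 by have := t.n_le; omega]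
         exact card_pdom_le_phi_succ hφ t.g_card hg'2 hcard hT,
      filter_psubF_nonempty_of_weight_pos (ha₀.trans_le hags'), fun f hf => (mem_filter.mp hf).2⟩
  have hr₀ : ∀ f ∈ s.P, 0 ≤ r f := fun f hf => (hr f (mem_filter.mp hf).1).1
  have hags_s : a ≤ weight s.P r s.g := hags'.trans (weight_filter_psubF (PSub.refl gs)).ge
  obtain ⟨hlow, hup⟩ := IsStable.Fstar_bounds hr₀ hstable.filter_psubF
  refine ⟨s, ⟨Nat.sub_le _ _, hg'1.trans hg'gs, filter_subset _ _⟩, rfl, hg'gs,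
    fun f => mem_filter, ?_, fun h hgh hcard => ⟨Fstar_le_weight hr₀ hgh hcard, hup h hgh hcard⟩⟩
  refine le_trans (mul_le_mul_of_nonneg_right hags_s (sub_nonneg.mpr ?_)) hlow
  exact inv_le_one_of_one_le₀ (one_le_pow₀ one_le_two)

end MeasuredCreatures
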